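/- Let Σ be a spacelike graph T = T_Σ(X) in 2D Minkowski space containing the set R = {(T, X) : T = t₀, |X| ≥ X₀} in its causal shadow, i.e., T_Σ(X) > |X| − U₀ for all X (so Σ is not in the chronological past or future of the point (−U₀, 0)). If Σ is spacelike (|T_Σ'| < 1) and passes through a point (T(0), 0) with T(0) < −U₀ + ε for small ε > 0, then the curvature bound |K_Σ| ≤ K_max together with the constraint T_Σ(X) > |X| − U₀ forces K_max ≥ C/ε for some constant C > 0 (i.e., K_max·ε is bounded below by a positive constant). -/

import Mathlib

/-!
Dividing by `(1 - T'²)^{3/2} ≤ 1` only enlarges `T''`, so the curvature bound gives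
`|T''| ≤ K`, and two applications of the mean value theorem give
`T(L) + T(-L) - 2 T(0) ≤ 2 K L²`. The shadow condition puts `T(±L) > L - U₀` while
`T(0) = -U₀ + ε`, hence `L - K L² < ε`; the choice `L = 1 / (2K)` gives `K ε > 1/4`.
-/

open Set

theorem abs_le_abs_div_one_sub_sq_rpow {a v : ℝ} (hv : |v| < 1) :
    |a| ≤ |a / (1 - v ^ 2) ^ ((3 : ℝ) / 2)| := by
  have hv2 : v ^ 2 < 1 := by rwa [sq_lt_one_iff_abs_lt_one]
  have hpos : 0 < (1 - v ^ 2) ^ ((3 : ℝ) / 2) := Real.rpow_pos_of_pos (by linarith) _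
  have hle : (1 - v ^ 2) ^ ((3 : ℝ) / 2) ≤ 1 :=
    Real.rpow_le_one (by linarith) (by nlinarith) (by norm_num)
  rw [abs_div, abs_of_pos hpos]
  exact (le_div_iff₀ hpos).mpr (mul_le_of_le_one_right (abs_nonneg a) hle)

section SecondDerivativeBound

variable {f : ℝ → ℝ} {K : ℝ}

theorem abs_deriv_sub_deriv_le (hf' : Differentiable ℝ (deriv f))
    (hK : ∀ x, |deriv (deriv f) x| ≤ K) (a x : ℝ) :
    |deriv f x - deriv f a| ≤ K * |x - a| :=
  Convex.norm_image_sub_le_of_norm_deriv_le (fun y _ => hf' y) (fun y _ => hK y) convex_univ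
    (mem_univ a) (mem_univ x)

theorem abs_sub_sub_deriv_mul_le (hf : Differentiable ℝ f) (hf' : Differentiable ℝ (deriv f))
    (hK : ∀ x, |deriv (deriv f) x| ≤ K) (a x : ℝ) :
    |f x - f a - deriv f a * (x - a)| ≤ K * (x - a) ^ 2 := by
  set g : ℝ → ℝ := fun y => f y - y * deriv f a
  have hg : ∀ y, HasDerivAt g (deriv f y - deriv f a) y := fun y =>
    (hf y).hasDerivAt.sub (hasDerivAt_mul_const (deriv f a))
  have hbound : ∀ y ∈ uIcc a x, ‖deriv g y‖ ≤ K * |x - a| := fun y hy => by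
    rw [(hg y).deriv, Real.norm_eq_abs]
    calc |deriv f y - deriv f a| ≤ K * |y - a| := abs_deriv_sub_deriv_le hf' hK a y
      _ ≤ K * |x - a| :=
        mul_le_mul_of_nonneg_left (abs_sub_left_of_mem_uIcc hy) ((abs_nonneg _).trans (hK a))
  have := Convex.norm_image_sub_le_of_norm_deriv_le (fun y _ => (hg y).differentiableAt) hbound
    (convex_uIcc a x) left_mem_uIcc right_mem_uIcc
  rw [Real.norm_eq_abs, Real.norm_eq_abs] at this
  calc |f x - f a - deriv f a * (x - a)| = |g x - g a| := by simp only [g]; ring_nf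
    _ ≤ K * |x - a| * |x - a| := this
    _ = K * (x - a) ^ 2 := by rw [mul_assoc, ← sq, sq_abs]

theorem add_sub_two_mul_le_mul_sq (hf : Differentiable ℝ f) (hf' : Differentiable ℝ (deriv f))
    (hK : ∀ x, |deriv (deriv f) x| ≤ K) (a h : ℝ) :
    f (a + h) + f (a - h) - 2 * f a ≤ 2 * K * h ^ 2 := by
  have hplus := abs_le.mp (abs_sub_sub_deriv_mul_le hf hf' hK a (a + h))
  have hminus := abs_le.mp (abs_sub_sub_deriv_mul_le hf hf' hK a (a - h))
  ring_nf at hplus hminus ⊢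
  linarith [hplus.2, hminus.2]

end SecondDerivativeBound

/-- there is a universal constant `C > 0` such that any C² spacelike
graph `T = T_Σ(X)` in 1+1 Minkowski space with curvature `|K_Σ| ≤ K_max`, lying
outside the chronological past/future of `(−U₀, 0)` (i.e. `T(X) > |X| − U₀` for all
`X`), and passing through `(T(0), 0)` with `T(0) = −U₀ + ε` for small `ε > 0`, must
have `K_max ≥ C/ε`. -/
theorem stmt_14 :
    ∃ C : ℝ, 0 < C ∧
      ∀ (U₀ ε Kmax : ℝ) (T : ℝ → ℝ), 0 < U₀ → 0 < ε → ε ≤ U₀ → 0 < Kmax →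
        ContDiff ℝ 2 T →
        (∀ X : ℝ, |deriv T X| < 1) →
        (∀ X : ℝ, |deriv (deriv T) X / (1 - (deriv T X) ^ 2) ^ ((3 : ℝ) / 2)| ≤ Kmax) →
        (∀ X : ℝ, |X| - U₀ < T X) →
        T 0 = -U₀ + ε →
        C / ε ≤ Kmax := by
  refine ⟨1 / 4, by norm_num, ?_⟩
  intro U₀ ε K T _ hε _ hK hT hspacelike hcurv hshadow hT0
  have hT'' : ∀ X, |deriv (deriv T) X| ≤ K := fun X =>
    (abs_le_abs_div_one_sub_sq_rpow (hspacelike X)).trans (hcurv X)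
  set L := 1 / (2 * K)
  have hL : 0 < L := by positivity
  have hKL : K * L = 1 / 2 := by simp only [L]; field_simp
  have hsecond := add_sub_two_mul_le_mul_sq (hT.differentiable (by norm_num))
    hT.differentiable_deriv_two hT'' 0 L
  rw [zero_add, zero_sub] at hsecond
  have hright := hshadow L
  have hleft := hshadow (-L)
  rw [abs_of_pos hL] at hright
  rw [abs_neg, abs_of_pos hL] at hleft
  have hKL2 : K * L ^ 2 = L / 2 := by rw [sq, ← mul_assoc, hKL]; ring
  have hεL : L / 2 < ε := by linarith
  rw [div_le_iff₀ hε]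
  linarith [mul_lt_mul_of_pos_left hεL hK]
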